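/- arXiv:2403.17273 — 7 statements merged into one kernel-verified Lean document; each statement's English description precedes it below -/
import Mathlib

section
/- For any real K ≠ 0, setting s = sign(K), W = (1/2)·arccos(e^{-2|K|}), and A = e^{|K|}/2, one has for all z₁, z₂ ∈ {−1, +1}: e^{−K z₁ z₂} = A · Σ_{h ∈ {−1,+1}} e^{−i W (z₁ + s z₂) h} = 2A · cos(W(z₁ + s z₂)). In particular the non-unitary two-body exponential is an equal-weight sum of two unitary phases. -/
/-!
Put `t = sign K · z₁ z₂ ∈ {±1}`. Then `K z₁ z₂ = |K| t` and `z₁ + s z₂ = z₁ (1 + t)`, and since cosine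
is even the claim reduces to `exp (-|K| t) = exp |K| · cos (W (1 + t))`. For `t = -1` both sides are
`exp |K|`; for `t = 1` it is `cos 2W = exp (-2|K|)`, which is how `W` was chosen. The sum over `h` is
`2 cos` by Euler's formula.
-/

lemma Real.sign_mul_abs (r : ℝ) : Real.sign r * |r| = r := by
  rcases lt_trichotomy r 0 with h | rfl | h
  · rw [Real.sign_of_neg h, abs_of_neg h, neg_one_mul, neg_neg]
  · rw [abs_zero, mul_zero]
  · rw [Real.sign_of_pos h, abs_of_pos h, one_mul]

lemma mul_eq_neg_one_or_one {a b : ℝ} (ha : a = -1 ∨ a = 1) (hb : b = -1 ∨ b = 1) :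
    a * b = -1 ∨ a * b = 1 := by
  rcases ha with rfl | rfl <;> rcases hb with rfl | rfl <;> norm_num

lemma Real.cos_mul_of_eq_neg_one_or_one {z : ℝ} (hz : z = -1 ∨ z = 1) (x : ℝ) :
    Real.cos (z * x) = Real.cos x := by
  rcases hz with rfl | rfl <;> simp

lemma exp_neg_mul_eq_exp_mul_cos_half_arccos {a t : ℝ} (ha : 0 ≤ a) (ht : t = -1 ∨ t = 1) :
    Real.exp (-(a * t)) =
      Real.exp a * Real.cos (Real.arccos (Real.exp (-2 * a)) / 2 * (1 + t)) := by
  rcases ht with rfl | rfl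
  · simp
  · have hle : Real.exp (-2 * a) ≤ 1 := Real.exp_le_one_iff.2 (by linarith)
    have hge : -1 ≤ Real.exp (-2 * a) := by linarith [Real.exp_pos (-2 * a)]
    rw [show Real.arccos (Real.exp (-2 * a)) / 2 * (1 + 1) = Real.arccos (Real.exp (-2 * a)) by
      ring, Real.cos_arccos hge hle, ← Real.exp_add]
    ring_nf

lemma exp_neg_mul_mul_eq_exp_abs_mul_cos {K z₁ z₂ : ℝ} (hK : K ≠ 0)
    (hz₁ : z₁ = -1 ∨ z₁ = 1) (hz₂ : z₂ = -1 ∨ z₂ = 1) :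
    Real.exp (-K * z₁ * z₂) = Real.exp |K| *
      Real.cos (Real.arccos (Real.exp (-2 * |K|)) / 2 * (z₁ + Real.sign K * z₂)) := by
  set W := Real.arccos (Real.exp (-2 * |K|)) / 2
  have ht := mul_eq_neg_one_or_one
    (mul_eq_neg_one_or_one (Real.sign_apply_eq_of_ne_zero K hK) hz₁) hz₂
  have hz₁sq : z₁ * z₁ = 1 := by rcases hz₁ with rfl | rfl <;> norm_num
  calc Real.exp (-K * z₁ * z₂) = Real.exp (-(|K| * (Real.sign K * z₁ * z₂))) := by
        congr 1; linear_combination (z₁ * z₂) * Real.sign_mul_abs K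
    _ = Real.exp |K| * Real.cos (W * (1 + Real.sign K * z₁ * z₂)) :=
        exp_neg_mul_eq_exp_mul_cos_half_arccos (abs_nonneg K) ht
    _ = Real.exp |K| * Real.cos (z₁ * (W * (1 + Real.sign K * z₁ * z₂))) := by
        rw [Real.cos_mul_of_eq_neg_one_or_one hz₁]
    _ = Real.exp |K| * Real.cos (W * (z₁ + Real.sign K * z₂)) := by
        congr 2; linear_combination (W * Real.sign K * z₂) * hz₁sq

lemma sum_pair_exp_neg_I_mul (x : ℂ) :
    ∑ h ∈ ({-1, 1} : Finset ℝ), Complex.exp (-Complex.I * x * h) = 2 * Complex.cos x := by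
  rw [Finset.sum_pair (by norm_num), Complex.cos]
  push_cast
  ring_nf

/-- Scalar two-body RBM auxiliary-field identity: for `K ≠ 0`, with
`s = sign K`, `W = arccos (exp (-2|K|)) / 2`, `A = exp |K| / 2`, and
`z₁, z₂ ∈ {-1, 1}`, the non-unitary exponential `exp (-K z₁ z₂)` equals the
equal-weight sum over `h ∈ {-1, 1}` of the unitary phases
`A · exp (-i W (z₁ + s z₂) h)`, which in turn equals `2 A cos (W (z₁ + s z₂))`. -/
theorem rbm_two_body_identity (K : ℝ) (hK : K ≠ 0)
    (s W A : ℝ) (hs : s = Real.sign K)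
    (hW : W = Real.arccos (Real.exp (-2 * |K|)) / 2)
    (hA : A = Real.exp |K| / 2)
    (z₁ z₂ : ℝ) (hz₁ : z₁ = -1 ∨ z₁ = 1) (hz₂ : z₂ = -1 ∨ z₂ = 1) :
    Complex.exp (-(K : ℂ) * z₁ * z₂) =
      (A : ℂ) * ∑ h ∈ ({-1, 1} : Finset ℝ),
        Complex.exp (-Complex.I * W * ((z₁ : ℂ) + s * z₂) * h) ∧
    Complex.exp (-(K : ℂ) * z₁ * z₂) =
      2 * (A : ℂ) * Complex.cos ((W : ℂ) * ((z₁ : ℂ) + s * z₂)) := by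
  have hreal : Real.exp (-K * z₁ * z₂) = 2 * A * Real.cos (W * (z₁ + s * z₂)) := by
    rw [exp_neg_mul_mul_eq_exp_abs_mul_cos hK hz₁ hz₂, hs, hW, hA]
    ring
  have hcos : Complex.exp (-(K : ℂ) * z₁ * z₂) =
      2 * (A : ℂ) * Complex.cos ((W : ℂ) * ((z₁ : ℂ) + s * z₂)) := by
    exact_mod_cast congrArg ((↑) : ℝ → ℂ) hreal
  have hsum := sum_pair_exp_neg_I_mul ((W : ℂ) * ((z₁ : ℂ) + s * z₂))
  simp only [← mul_assoc] at hsum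
  refine ⟨?_, hcos⟩
  rw [hcos, hsum]
  ring
end

section
/- For any real K ≠ 0, setting s = sign(K), W = (1/2)·arccos(e^{−2|K|}), and A = e^{|K|}/2, one has for all z ∈ {−1, +1}: e^{−K z} = A · Σ_{h ∈ {−1,+1}} e^{−i W (z + s) h} = 2A · cos(W(z + s)). -/
/-
With `c = arccos (exp (-2|K|))` we have `cos c = exp (-2|K|)`, and `W (z + s)` is `± c` when
`z = s` and `0` when `z = -s`. Hence `exp |K| * cos (W (z + s))` is `exp (-|K|)` when `z = s` and
`exp |K|` when `z = -s`, which is `exp (-K z)` in both cases. Summing `exp (-i θ h)` over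
`h = ±1` gives `2 cos θ`.
-/

namespace Real

theorem cos_arccos_exp_neg_two_mul_abs (K : ℝ) :
    cos (arccos (exp (-2 * |K|))) = exp (-2 * |K|) :=
  cos_arccos (by linarith [exp_pos (-2 * |K|)])
    (exp_le_one_iff.2 (by linarith [abs_nonneg K]))

theorem exp_neg_mul_eq_exp_abs_mul_cos {K z : ℝ} (hz : z = -1 ∨ z = 1) :
    exp (-(K * z)) =
      exp |K| * cos (arccos (exp (-2 * |K|)) / 2 * (z + sign K)) := by
  have hc := cos_arccos_exp_neg_two_mul_abs K
  rcases lt_trichotomy K 0 with hK | rfl | hK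
  · rw [sign_of_neg hK]
    rcases hz with rfl | rfl
    · rw [show arccos (exp (-2 * |K|)) / 2 * (-1 + -1) = -arccos (exp (-2 * |K|)) by ring,
        cos_neg, hc, ← exp_add, abs_of_neg hK]
      ring_nf
    · simp [abs_of_neg hK]
  · simp
  · rw [sign_of_pos hK]
    rcases hz with rfl | rfl
    · simp [abs_of_pos hK]
    · rw [show arccos (exp (-2 * |K|)) / 2 * (1 + 1) = arccos (exp (-2 * |K|)) by ring,
        hc, ← exp_add, abs_of_pos hK]
      ring_nf

end Real

namespace Complex

theorem sum_pm_one_exp_neg_I_mul (θ : ℂ) :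
    ∑ h ∈ ({-1, 1} : Finset ℝ), exp (-I * θ * h) = 2 * cos θ := by
  rw [Finset.sum_pair (by norm_num), cos]
  push_cast
  ring_nf

end Complex

theorem rbm_one_body_identity_general (K : ℝ)
    (s W A : ℝ) (hs : s = Real.sign K)
    (hW : W = Real.arccos (Real.exp (-2 * |K|)) / 2)
    (hA : A = Real.exp |K| / 2)
    (z : ℝ) (hz : z = -1 ∨ z = 1) :
    Complex.exp (-(K : ℂ) * z) =
      (A : ℂ) * ∑ h ∈ ({-1, 1} : Finset ℝ),
        Complex.exp (-Complex.I * W * ((z : ℂ) + s) * h) ∧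
    Complex.exp (-(K : ℂ) * z) =
      2 * (A : ℂ) * Complex.cos ((W : ℂ) * ((z : ℂ) + s)) := by
  have hcos :
      Complex.exp (-(K : ℂ) * z) = 2 * (A : ℂ) * Complex.cos ((W : ℂ) * ((z : ℂ) + s)) := by
    have := congrArg Complex.ofReal (Real.exp_neg_mul_eq_exp_abs_mul_cos (K := K) hz)
    subst hs hW hA
    push_cast at this ⊢
    rw [neg_mul, this]
    ring
  refine ⟨?_, hcos⟩
  simp_rw [hcos, mul_assoc (-Complex.I) (W : ℂ), Complex.sum_pm_one_exp_neg_I_mul]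
  ring

/-- Scalar one-body RBM auxiliary-field identity: for `K ≠ 0`, with
`s = sign K`, `W = arccos (exp (-2|K|)) / 2`, `A = exp |K| / 2`, and
`z ∈ {-1, 1}`: `exp (-K z) = A Σ_{h=±1} exp (-i W (z + s) h) = 2A cos (W (z + s))`. -/
theorem rbm_one_body_identity (K : ℝ) (hK : K ≠ 0)
    (s W A : ℝ) (hs : s = Real.sign K)
    (hW : W = Real.arccos (Real.exp (-2 * |K|)) / 2)
    (hA : A = Real.exp |K| / 2)
    (z : ℝ) (hz : z = -1 ∨ z = 1) :
    Complex.exp (-(K : ℂ) * z) =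
      (A : ℂ) * ∑ h ∈ ({-1, 1} : Finset ℝ),
        Complex.exp (-Complex.I * W * ((z : ℂ) + s) * h) ∧
    Complex.exp (-(K : ℂ) * z) =
      2 * (A : ℂ) * Complex.cos ((W : ℂ) * ((z : ℂ) + s)) :=
  rbm_one_body_identity_general K s W A hs hW hA z hz
end

section
/- Let K > 0, W = (1/2)·arctan((1 − e^{−8K})^{1/4}), A = (1/2)·(sec⁴(2W)·sec(4W))^{1/8}, and K₂ = −(1/8)·log(cos(4W)). Then for all z₁, z₂, z₃, z₄ ∈ {−1,+1}: exp[−(K z₁z₂z₃z₄ + K₂(z₁z₂ + z₁z₃ + z₂z₃ + z₁z₄ + z₂z₄ + z₃z₄))] = A · Σ_{h ∈ {−1,+1}} e^{−i(W(z₁+z₂+z₃) + W z₄)h}. -/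
/-!
On spins `zᵢ = ±1` both sides depend only on `s = z₁ + z₂ + z₃ + z₄ ∈ {0, ±2, ±4}`: the sum over
the auxiliary spin is `2A cos (W s)`, while `z₁z₂z₃z₄ = ±1` and the pair sum is `(s² - 4) / 2`.
The identity thus reduces to three scalar equations, `e^K = 2A cos 2W`, `e^{-K-6K₂} = 2A cos 4W`
and `e^{-K+2K₂} = 2A`. Writing `cos 2W = eᵃ`, `cos 4W = eᵇ`, all three are linear in `K, K₂, a, b`
once `e^{-8K} = cos 4W / cos⁴ 2W`, and this last relation is the choice of `W`:
`cos (2 arctan t) = (1 - t⁴) cos⁴ (arctan t)`.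
-/

open Real Complex

theorem Real.cos_two_mul_arctan (t : ℝ) :
    Real.cos (2 * Real.arctan t) = (1 - t ^ 4) * Real.cos (Real.arctan t) ^ 4 := by
  rw [Real.cos_two_mul,
    show Real.cos (Real.arctan t) ^ 4 = (Real.cos (Real.arctan t) ^ 2) ^ 2 by ring, cos_sq_arctan]
  field_simp
  ring

theorem sum_neg_one_one_cexp_neg_I_mul (θ : ℂ) :
    ∑ h ∈ ({-1, 1} : Finset ℝ), cexp (-I * θ * h) = 2 * Complex.cos θ := by
  rw [Finset.sum_pair (by norm_num), Complex.two_cos]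
  push_cast
  ring_nf

theorem rbm_coupling_relations {c₂ c₄ K K₂ A : ℝ} (hc₂ : 0 < c₂) (hc₄ : 0 < c₄)
    (hK : c₄ = Real.exp (-8 * K) * c₂ ^ 4)
    (hA : A = ((1 / c₂) ^ (4 : ℕ) * (1 / c₄)) ^ ((1 : ℝ) / 8) / 2)
    (hK₂ : K₂ = -(1 / 8) * Real.log c₄) :
    Real.exp K = 2 * A * c₂ ∧ Real.exp (-(K + 6 * K₂)) = 2 * A * c₄ ∧
      Real.exp (-K + 2 * K₂) = 2 * A := by
  obtain ⟨a, rfl⟩ : ∃ a, Real.exp a = c₂ := ⟨_, Real.exp_log hc₂⟩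
  obtain ⟨b, rfl⟩ : ∃ b, Real.exp b = c₄ := ⟨_, Real.exp_log hc₄⟩
  have hKab : b = -8 * K + 4 * a := by
    rwa [← Real.exp_nat_mul, ← Real.exp_add, Real.exp_eq_exp, Nat.cast_ofNat] at hK
  have h2A : 2 * A = Real.exp (-(4 * a + b) / 8) := by
    rw [hA, one_div, one_div, ← Real.exp_neg, ← Real.exp_neg, ← Real.exp_nat_mul, ← Real.exp_add,
      ← Real.exp_mul]
    ring_nf
  rw [hK₂, Real.log_exp, h2A, ← Real.exp_add, ← Real.exp_add]
  refine ⟨?_, ?_, ?_⟩ <;> rw [Real.exp_eq_exp] <;> linarith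

theorem exp_four_spin_eq_two_mul_cos {K K₂ A W : ℝ}
    (h₂ : Real.exp K = 2 * A * Real.cos (2 * W))
    (h₄ : Real.exp (-(K + 6 * K₂)) = 2 * A * Real.cos (4 * W))
    (h₀ : Real.exp (-K + 2 * K₂) = 2 * A)
    {z₁ z₂ z₃ z₄ : ℝ} (hz₁ : z₁ = -1 ∨ z₁ = 1) (hz₂ : z₂ = -1 ∨ z₂ = 1)
    (hz₃ : z₃ = -1 ∨ z₃ = 1) (hz₄ : z₄ = -1 ∨ z₄ = 1) :
    Real.exp (-(K * z₁ * z₂ * z₃ * z₄ +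
        K₂ * (z₁ * z₂ + z₁ * z₃ + z₂ * z₃ + z₁ * z₄ + z₂ * z₄ + z₃ * z₄))) =
      2 * A * Real.cos (W * (z₁ + z₂ + z₃ + z₄)) := by
  rcases hz₁ with rfl | rfl <;> rcases hz₂ with rfl | rfl <;>
    rcases hz₃ with rfl | rfl <;> rcases hz₄ with rfl | rfl <;>
    norm_num <;> ring_nf at h₂ h₄ h₀ ⊢ <;> assumption

/-- Scalar four-body RBM identity (case `sign K = +1`): with
`W = arctan ((1 - exp (-8K))^(1/4)) / 2`,
`A = (sec⁴(2W) sec(4W))^(1/8) / 2`, and induced two-body coupling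
`K₂ = -(1/8) log (cos (4W))`, for all `z₁, z₂, z₃, z₄ ∈ {-1, 1}`:
`exp (-(K z₁z₂z₃z₄ + K₂(z₁z₂+z₁z₃+z₂z₃+z₁z₄+z₂z₄+z₃z₄)))
  = A Σ_{h=±1} exp (-i (W(z₁+z₂+z₃) + W z₄) h)`. -/
theorem rbm_four_body_identity (K : ℝ) (hK : 0 < K)
    (W A K₂ : ℝ)
    (hW : W = Real.arctan ((1 - Real.exp (-8 * K)) ^ ((1 : ℝ) / 4)) / 2)
    (hA : A = ((1 / Real.cos (2 * W)) ^ (4 : ℕ) * (1 / Real.cos (4 * W))) ^ ((1 : ℝ) / 8) / 2)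
    (hK₂ : K₂ = -(1 / 8) * Real.log (Real.cos (4 * W)))
    (z₁ z₂ z₃ z₄ : ℝ) (hz₁ : z₁ = -1 ∨ z₁ = 1) (hz₂ : z₂ = -1 ∨ z₂ = 1)
    (hz₃ : z₃ = -1 ∨ z₃ = 1) (hz₄ : z₄ = -1 ∨ z₄ = 1) :
    Complex.exp (-((K : ℂ) * z₁ * z₂ * z₃ * z₄ +
        (K₂ : ℂ) * (z₁ * z₂ + z₁ * z₃ + z₂ * z₃ + z₁ * z₄ + z₂ * z₄ + z₃ * z₄))) =
      (A : ℂ) * ∑ h ∈ ({-1, 1} : Finset ℝ),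
        Complex.exp (-Complex.I * ((W : ℂ) * ((z₁ : ℂ) + z₂ + z₃) + (W : ℂ) * z₄) * h) := by
  set t := (1 - Real.exp (-8 * K)) ^ ((1 : ℝ) / 4)
  have ht : t ^ 4 = 1 - Real.exp (-8 * K) := by
    have : Real.exp (-8 * K) < 1 := Real.exp_lt_one_iff.mpr (by linarith)
    rw [← Real.rpow_natCast, ← Real.rpow_mul (by linarith)]
    norm_num
  have h2W : 2 * W = Real.arctan t := by rw [hW]; ring
  have hc₂ : 0 < Real.cos (2 * W) := h2W ▸ cos_arctan_pos t
  have hcos : Real.cos (4 * W) = Real.exp (-8 * K) * Real.cos (2 * W) ^ 4 := by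
    rw [show 4 * W = 2 * Real.arctan t by linarith, Real.cos_two_mul_arctan, ht, h2W]
    ring
  have hc₄ : 0 < Real.cos (4 * W) := by rw [hcos]; positivity
  obtain ⟨h₂, h₄, h₀⟩ := rbm_coupling_relations hc₂ hc₄ hcos hA hK₂
  have hreal := exp_four_spin_eq_two_mul_cos h₂ h₄ h₀ hz₁ hz₂ hz₃ hz₄
  rw [sum_neg_one_one_cexp_neg_I_mul,
    show (W : ℂ) * (z₁ + z₂ + z₃) + W * z₄ = ((W * (z₁ + z₂ + z₃ + z₄) : ℝ) : ℂ) by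
      push_cast; ring,
    ← Complex.ofReal_cos]
  exact_mod_cast hreal.trans (by ring)
end

section
/- Let M ≥ 2 be even and define F : [0, π/(2M)) → ℝ by F(W) = 2^{−M} Σ_{k=0}^{M} (−1)^k C(M,k) log(2·cos((2k−M)W)), where C(M,k) is the binomial coefficient. Then F is continuous on [0, π/(2M)), F(0) = 0, F(W) → −∞ as W → π/(2M)⁻, and consequently F is surjective onto an interval containing (−∞, 0]. -/
/-!
At `W = 0` every logarithm equals `log 2`, so `F 0` is `log 2 / 2^M` times the alternating
binomial sum, which vanishes. On `[0, π/(2M))` all the angles `(2k - M) W` lie in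
`(-π/2, π/2)`, so every term is continuous. At `W = π/(2M)` the inner terms `0 < k < M`
still have `|2k - M| < M`, hence stay bounded, while the two extreme terms `k = 0, M` both
equal `log (2 cos (M W))` because `M` is even, and this tends to `-∞`. The intermediate
value theorem on the connected set `[0, π/(2M))` then yields every value in `(-∞, 0]`.
-/

open Real Filter Set Topology

lemma cos_pos_of_abs_lt_pi_div_two {x : ℝ} (hx : |x| < π / 2) : 0 < cos x :=
  cos_pos_of_mem_Ioo ⟨by linarith [neg_abs_le x], by linarith [le_abs_self x]⟩

lemma cos_mul_pos_of_mem_Ico {b c W : ℝ} (hc : 0 < c) (hb : |b| ≤ c)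
    (hW : W ∈ Ico 0 (π / (2 * c))) : 0 < cos (b * W) := by
  refine cos_pos_of_abs_lt_pi_div_two ?_
  have hcW : c * W < π / 2 := by
    have := (lt_div_iff₀ (by positivity)).1 hW.2
    linarith
  calc |b * W| = |b| * W := by rw [abs_mul, abs_of_nonneg hW.1]
    _ ≤ c * W := mul_le_mul_of_nonneg_right hb hW.1
    _ < π / 2 := hcW

lemma cos_mul_pi_div_two_mul_pos {b c : ℝ} (hb : |b| < c) : 0 < cos (b * (π / (2 * c))) := by
  have hc : 0 < c := (abs_nonneg b).trans_lt hb
  refine cos_pos_of_abs_lt_pi_div_two ?_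
  rw [abs_mul, abs_of_pos (by positivity : 0 < π / (2 * c))]
  calc |b| * (π / (2 * c)) < c * (π / (2 * c)) := mul_lt_mul_of_pos_right hb (by positivity)
    _ = π / 2 := by field_simp

lemma tendsto_const_mul_nhdsLT {c : ℝ} (hc : 0 < c) (a : ℝ) :
    Tendsto (c * ·) (𝓝[<] a) (𝓝[<] (c * a)) :=
  tendsto_nhdsWithin_of_tendsto_nhds_of_eventually_within _
    (((continuous_const_mul c).tendsto a).mono_left nhdsWithin_le_nhds)
    (eventually_nhdsWithin_of_forall fun _ hx => mul_lt_mul_of_pos_left hx hc)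

lemma tendsto_log_two_mul_cos_nhdsLT_pi_div_two :
    Tendsto (fun x => log (2 * cos x)) (𝓝[<] (π / 2)) atBot := by
  refine tendsto_log_nhdsGT_zero.comp
    (tendsto_nhdsWithin_of_tendsto_nhds_of_eventually_within _ ?_ ?_)
  · have h : Tendsto (fun x => 2 * cos x) (𝓝 (π / 2)) (𝓝 (2 * cos (π / 2))) :=
      (continuous_const.mul continuous_cos).tendsto _
    rw [cos_pi_div_two, mul_zero] at h
    exact h.mono_left nhdsWithin_le_nhds
  · filter_upwards [Ioo_mem_nhdsLT (by linarith [pi_pos] : -(π / 2) < π / 2)] with x hx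
    exact mul_pos two_pos (cos_pos_of_mem_Ioo hx)

lemma Finset.sum_range_succ_eq_add_add_sum_Ioo {β : Type*} [AddCommMonoid β] (f : ℕ → β)
    {n : ℕ} (hn : 0 < n) :
    ∑ k ∈ Finset.range (n + 1), f k = f 0 + f n + ∑ k ∈ Finset.Ioo 0 n, f k := by
  have hsplit : Finset.range (n + 1) = insert 0 (insert n (Finset.Ioo 0 n)) := by
    ext k
    simp only [Finset.mem_range, Finset.mem_insert, Finset.mem_Ioo]
    omega
  rw [hsplit, Finset.sum_insert (by simp; omega), Finset.sum_insert (by simp), add_assoc]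

lemma abs_two_mul_sub_le {k M : ℕ} (hk : k ≤ M) : |(2 * k : ℝ) - M| ≤ M := by
  have hk' : (k : ℝ) ≤ M := by exact_mod_cast hk
  rw [abs_le]
  constructor <;> linarith [(Nat.cast_nonneg k : (0 : ℝ) ≤ k)]

lemma abs_two_mul_sub_lt {k M : ℕ} (hk : k ∈ Finset.Ioo 0 M) : |(2 * k : ℝ) - M| < M := by
  obtain ⟨hk0, hkM⟩ := Finset.mem_Ioo.1 hk
  have hk0' : (1 : ℝ) ≤ k := by exact_mod_cast hk0
  have hkM' : (k : ℝ) + 1 ≤ M := by exact_mod_cast hkM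
  rw [abs_lt]
  constructor <;> linarith

noncomputable def rbmTerm (M k : ℕ) (W : ℝ) : ℝ :=
  (-1 : ℝ) ^ k * (M.choose k : ℝ) * log (2 * cos (((2 * k : ℝ) - M) * W))

lemma rbmTerm_zero (M : ℕ) (W : ℝ) : rbmTerm M 0 W = log (2 * cos (M * W)) := by
  simp [rbmTerm]

lemma rbmTerm_self {M : ℕ} (hM : Even M) (W : ℝ) : rbmTerm M M W = log (2 * cos (M * W)) := by
  simp only [rbmTerm, hM.neg_one_pow, Nat.choose_self, Nat.cast_one, one_mul]
  ring_nf

lemma sum_rbmTerm_zero {M : ℕ} (hM : M ≠ 0) : ∑ k ∈ Finset.range (M + 1), rbmTerm M k 0 = 0 := by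
  have h : ∑ k ∈ Finset.range (M + 1), (-1 : ℝ) ^ k * (M.choose k : ℝ) = 0 := by
    exact_mod_cast Int.alternating_sum_range_choose_of_ne hM
  simp only [rbmTerm, mul_zero, cos_zero, mul_one, ← Finset.sum_mul, h, zero_mul]

lemma continuousOn_rbmTerm {M k : ℕ} (hM : 0 < M) (hk : k ≤ M) :
    ContinuousOn (rbmTerm M k) (Ico 0 (π / (2 * M))) := by
  refine continuousOn_const.mul (ContinuousOn.log (by fun_prop) fun W hW => ?_)
  exact (mul_pos two_pos
    (cos_mul_pos_of_mem_Ico (by positivity) (abs_two_mul_sub_le hk) hW)).ne'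

lemma continuousAt_rbmTerm {M k : ℕ} (hk : k ∈ Finset.Ioo 0 M) :
    ContinuousAt (rbmTerm M k) (π / (2 * M)) := by
  refine continuousAt_const.mul (ContinuousAt.log (by fun_prop) ?_)
  exact (mul_pos two_pos (cos_mul_pi_div_two_mul_pos (abs_two_mul_sub_lt hk))).ne'

lemma sum_rbmTerm_eq {M : ℕ} (hM : 0 < M) (hMe : Even M) (W : ℝ) :
    ∑ k ∈ Finset.range (M + 1), rbmTerm M k W =
      2 * log (2 * cos (M * W)) + ∑ k ∈ Finset.Ioo 0 M, rbmTerm M k W := by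
  rw [Finset.sum_range_succ_eq_add_add_sum_Ioo _ hM, rbmTerm_zero, rbmTerm_self hMe]
  ring

lemma tendsto_sum_rbmTerm_atBot {M : ℕ} (hM : 0 < M) (hMe : Even M) :
    Tendsto (fun W => ∑ k ∈ Finset.range (M + 1), rbmTerm M k W)
      (𝓝[<] (π / (2 * M))) atBot := by
  simp_rw [sum_rbmTerm_eq hM hMe]
  refine Tendsto.atBot_add (Tendsto.const_mul_atBot two_pos ?_)
    ((tendsto_finsetSum _ fun k hk => (continuousAt_rbmTerm hk).tendsto).mono_left
      nhdsWithin_le_nhds)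
  have hlim := tendsto_const_mul_nhdsLT (Nat.cast_pos.2 hM : (0 : ℝ) < M) (π / (2 * M))
  rw [show (M : ℝ) * (π / (2 * M)) = π / 2 by field_simp] at hlim
  exact tendsto_log_two_mul_cos_nhdsLT_pi_div_two.comp hlim

/-- Solvability of the highest-order RBM coupling: for even `M ≥ 2`, the
function `F W = 2^{-M} Σ_{k=0}^{M} (-1)^k C(M,k) log (2 cos ((2k - M) W))`
is continuous on `[0, π/(2M))`, vanishes at `0`, tends to `-∞` as
`W → π/(2M)⁻`, and its image contains `(-∞, 0]`. -/
theorem rbm_highest_coupling_solvable (M : ℕ) (hM : 2 ≤ M) (hMe : Even M)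
    (F : ℝ → ℝ)
    (hF : ∀ W : ℝ, F W = (1 / 2 ^ M) *
      ∑ k ∈ Finset.range (M + 1),
        (-1 : ℝ) ^ k * (M.choose k : ℝ) *
          Real.log (2 * Real.cos (((2 * k : ℝ) - M) * W))) :
    ContinuousOn F (Set.Ico 0 (π / (2 * M))) ∧
    F 0 = 0 ∧
    Tendsto F (nhdsWithin (π / (2 * M)) (Set.Ico 0 (π / (2 * M)))) atBot ∧
    Set.Iic (0 : ℝ) ⊆ F '' Set.Ico 0 (π / (2 * M)) := by
  have hM0 : 0 < M := by omega
  have hpos : (0 : ℝ) < π / (2 * M) := by positivity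
  have hFeq : F = fun W => 1 / 2 ^ M * ∑ k ∈ Finset.range (M + 1), rbmTerm M k W := funext hF
  have hcont : ContinuousOn F (Ico 0 (π / (2 * M))) := hFeq ▸ continuousOn_const.mul
    (continuousOn_finsetSum _ fun k hk =>
      continuousOn_rbmTerm hM0 (Finset.mem_range_succ_iff.1 hk))
  have hzero : F 0 = 0 := by simp only [hFeq, sum_rbmTerm_zero hM0.ne', mul_zero]
  have hbot : Tendsto F (𝓝[<] (π / (2 * M))) atBot :=
    hFeq ▸ (tendsto_sum_rbmTerm_atBot hM0 hMe).const_mul_atBot (by positivity)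
  rw [nhdsWithin_Ico_eq_nhdsLT hpos]
  refine ⟨hcont, hzero, hbot, ?_⟩
  simpa [hzero] using isPreconnected_Ico.intermediate_value_Iic (left_mem_Ico.2 hpos)
    (le_principal_iff.2 (Ico_mem_nhdsLT hpos)) hcont hbot
end

section
/- For all z ∈ {−1, +1} and all a, w ∈ ℝ: (1/√2)·(z·e^{i(a+w)z} + e^{−i(a+w)z}) = (e^{−iπ/4}/√2)·e^{i(π/4)z}·2·cos((π/4)·z − w − a − π/4). -/
open Real Complex

/-! Write `θ = a + w` and `φ = (π/4)(z - 1)`. The right-hand side is `(1/√2) e^{iφ} · 2 cos (φ - θ)`,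
and `e^{iφ} · 2 cos (φ - θ) = e^{iθ} + e^{i(2φ - θ)}` for all `φ, θ`. Since `2φ` is `0` for `z = 1`
and `-π` for `z = -1`, the second exponential is `z e^{-iθ}`, which is the left-hand side. -/

namespace Complex

theorem exp_mul_I_mul_two_cos_sub (φ θ : ℂ) :
    exp (φ * I) * (2 * cos (φ - θ)) = exp (θ * I) + exp ((2 * φ - θ) * I) := by
  rw [cos, mul_div_cancel₀ _ two_ne_zero, mul_add, ← exp_add, ← exp_add, add_comm]
  congr 2 <;> ring

theorem mul_exp_add_exp_neg_of_sign {z : ℂ} (hz : z = -1 ∨ z = 1) (θ : ℂ) :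
    z * exp (I * θ * z) + exp (-I * θ * z) =
      exp (θ * I) + exp ((2 * (π / 4 * (z - 1)) - θ) * I) := by
  rcases hz with rfl | rfl
  · have h : exp ((2 * (π / 4 * (-1 - 1)) - θ) * I) = -exp (-θ * I) := by
      rw [show (2 * (π / 4 * (-1 - 1)) - θ) * I = -θ * I + -(π * I) by ring, exp_add,
        exp_neg, exp_pi_mul_I]
      ring
    rw [h]
    ring_nf
  · ring_nf

end Complex

/-- Scalar identity encoding the action of the Hadamard gate on one visible
qubit of a unitary L-DBM wave function: for `z ∈ {-1, 1}` and real `a, w`,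
`(1/√2)(z e^{i(a+w)z} + e^{-i(a+w)z})
  = (e^{-iπ/4}/√2) e^{i(π/4)z} · 2 cos ((π/4)z - w - a - π/4)`. -/
theorem ldbm_hadamard_action (z : ℝ) (hz : z = -1 ∨ z = 1) (a w : ℝ) :
    (1 / (Real.sqrt 2 : ℂ)) *
        ((z : ℂ) * Complex.exp (Complex.I * ((a : ℂ) + w) * z) +
          Complex.exp (-Complex.I * ((a : ℂ) + w) * z)) =
      (Complex.exp (-Complex.I * (Real.pi / 4)) / (Real.sqrt 2 : ℂ)) *
        Complex.exp (Complex.I * ((Real.pi : ℂ) / 4) * z) *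
        (2 * Complex.cos (((Real.pi : ℂ) / 4) * z - w - a - (Real.pi : ℂ) / 4)) := by
  have hz' : (z : ℂ) = -1 ∨ (z : ℂ) = 1 := by exact_mod_cast hz
  have phase : exp (-I * (π / 4)) * exp (I * (π / 4) * z) = exp ((π / 4 * (z - 1)) * I) := by
    rw [← Complex.exp_add]; congr 1; ring
  calc _ = 1 / (√2 : ℂ) *
          (exp ((π / 4 * (z - 1)) * I) * (2 * Complex.cos (π / 4 * (z - 1) - (a + w)))) := by
        rw [mul_exp_add_exp_neg_of_sign hz', exp_mul_I_mul_two_cos_sub]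
    _ = _ := by
        rw [← phase, show (π / 4 * (z - 1) - (a + w) : ℂ) = π / 4 * z - w - a - π / 4 by ring]
        ring
end

section
/- Let H be a Hermitian operator on a finite-dimensional complex inner-product space with smallest eigenvalue E₀, and suppose the eigenspace of E₀ is one-dimensional, spanned by a unit vector g. If ψ₀ satisfies ⟨g, ψ₀⟩ ≠ 0, then the normalized imaginary-time-evolved state e^{−τH}ψ₀ / ‖e^{−τH}ψ₀‖ converges, as τ → ∞, to (⟨g,ψ₀⟩/|⟨g,ψ₀⟩|)·g. In particular, ⟨ψ(τ), H ψ(τ)⟩/‖ψ(τ)‖² → E₀, where ψ(τ) = e^{−τH}ψ₀. -/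
/-!
Expanding `ψ₀` in an orthonormal eigenbasis `bᵢ` of `H` gives
`e^{τE₀} e^{-τH} ψ₀ = ∑ᵢ e^{-τ(μᵢ - E₀)} ⟪bᵢ, ψ₀⟫ bᵢ`. Since `E₀` bounds the spectrum from below,
the terms with `μᵢ > E₀` decay and the others are constant, so `e^{τE₀} ψ(τ)` converges to the
orthogonal projection of `ψ₀` onto the ground eigenspace, i.e. to `⟪g, ψ₀⟫ g ≠ 0`. The normalized
state and the energy expectation are unchanged by positive rescaling of `ψ(τ)` and continuous away
from `0`, so they converge to their values at `⟪g, ψ₀⟫ g`.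
-/

open Filter Topology NormedSpace
open Module.End (eigenspace HasEigenvalue mem_eigenspace_iff)

section RCLike

variable {𝕜 E : Type*} [RCLike 𝕜] [NormedAddCommGroup E]

theorem NormedSpace.exp_apply_of_apply_eq_smul [NormedSpace 𝕜 E] [CompleteSpace E]
    {A : E →L[𝕜] E} {v : E} {c : 𝕜} (h : A v = c • v) : exp A v = exp c • v := by
  have hpow (n : ℕ) : (A ^ n) v = c ^ n • v := by
    induction n with
    | zero => simp
    | succ n ih => rw [pow_succ', mul_apply_eq_comp, ih, map_smul, h, smul_smul, pow_succ]
  refine ((exp_series_hasSum_exp' (𝕂 := 𝕜) A).mapL (ContinuousLinearMap.apply 𝕜 E v)).unique ?_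
  simpa [hpow, smul_smul] using (exp_series_hasSum_exp' (𝕂 := 𝕜) c).smul_const v

variable [InnerProductSpace 𝕜 E]

local notation "⟪" x ", " y "⟫" => inner 𝕜 x y

namespace LinearMap.IsSymmetric

variable [FiniteDimensional 𝕜 E] {T : E →ₗ[𝕜] E} (hT : T.IsSymmetric) {n : ℕ}
  (hn : Module.finrank 𝕜 E = n)

include hT in
theorem starProjection_eigenspace_eq_sum (μ₀ : ℝ) (x : E) :
    (eigenspace T μ₀).starProjection x =
      ∑ i, if hT.eigenvalues hn i = μ₀ then ⟪hT.eigenvectorBasis hn i, x⟫ • hT.eigenvectorBasis hn i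
        else 0 := by
  set b := hT.eigenvectorBasis hn
  have hb_mem (i) (hi : hT.eigenvalues hn i = μ₀) : b i ∈ eigenspace T μ₀ := by
    rw [mem_eigenspace_iff, hT.apply_eigenvectorBasis, hi]
  refine Submodule.eq_starProjection_of_mem_of_inner_eq_zero
    (Submodule.sum_mem _ fun i _ => ?_) fun w hw => ?_
  · split_ifs with hi
    · exact Submodule.smul_mem _ _ (hb_mem i hi)
    · exact Submodule.zero_mem _
  · nth_rewrite 1 [← b.sum_repr' x]
    rw [← Finset.sum_sub_distrib, sum_inner]
    refine Finset.sum_eq_zero fun i _ => ?_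
    split_ifs with hi
    · rw [sub_self, inner_zero_left]
    · have hne : (hT.eigenvalues hn i : 𝕜) ≠ μ₀ := by exact_mod_cast hi
      have horth : ⟪b i, w⟫ = 0 := hT.orthogonalFamily_eigenspaces hne
        ⟨b i, mem_eigenspace_iff.mpr (hT.apply_eigenvectorBasis hn i)⟩ ⟨w, hw⟩
      rw [sub_zero, inner_smul_left, horth, mul_zero]

end LinearMap.IsSymmetric

end RCLike

section RealNormed

variable {F : Type*} [NormedAddCommGroup F] [NormedSpace ℝ F]

theorem tendsto_exp_neg_mul_smul_atTop {d : ℝ} (hd : 0 ≤ d) (y : F) :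
    Tendsto (fun τ : ℝ => Real.exp (-(τ * d)) • y) atTop (𝓝 (if d = 0 then y else 0)) := by
  rcases hd.eq_or_lt with rfl | hd
  · simp
  · rw [if_neg hd.ne', ← zero_smul ℝ y]
    exact (Real.tendsto_exp_neg_atTop_nhds_zero.comp (tendsto_id.atTop_mul_const hd)).smul_const y

theorem tendsto_inv_norm_smul_of_tendsto_smul {α : Type*} {l : Filter α} {f : α → F} {r : α → ℝ} (hr : ∀ a, 0 < r a) {v : F}
    (hv : v ≠ 0) (h : Tendsto (fun a => r a • f a) l (𝓝 v)) :
    Tendsto (fun a => ‖f a‖⁻¹ • f a) l (𝓝 (‖v‖⁻¹ • v)) := by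
  have hscale (a : α) : ‖r a • f a‖⁻¹ • (r a • f a) = ‖f a‖⁻¹ • f a := by
    rw [norm_smul, Real.norm_of_nonneg (hr a).le, smul_smul, mul_inv_rev, mul_assoc,
      inv_mul_cancel₀ (hr a).ne', mul_one]
  exact ((h.norm.inv₀ (norm_ne_zero_iff.mpr hv)).smul h).congr hscale

end RealNormed

section ImaginaryTime

variable {E : Type*} [NormedAddCommGroup E] [InnerProductSpace ℂ E] [FiniteDimensional ℂ E]
  {T : E →L[ℂ] E}

theorem LinearMap.IsSymmetric.exp_neg_smul_apply_eigenvectorBasis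
    (hT : (T : E →ₗ[ℂ] E).IsSymmetric) {n : ℕ} (hn : Module.finrank ℂ E = n) (τ : ℝ) (i : Fin n) :
    exp ((-τ : ℂ) • T) (hT.eigenvectorBasis hn i) =
      Real.exp (-(τ * hT.eigenvalues hn i)) • hT.eigenvectorBasis hn i := by
  have heig : ((-τ : ℂ) • T) (hT.eigenvectorBasis hn i) =
      ((-(τ * hT.eigenvalues hn i) : ℝ) : ℂ) • hT.eigenvectorBasis hn i := by
    rw [_root_.smul_apply, ← ContinuousLinearMap.coe_coe, hT.apply_eigenvectorBasis,
      RCLike.ofReal_eq_complex_ofReal, smul_smul]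
    push_cast
    ring_nf
  rw [exp_apply_of_apply_eq_smul heig, ← Complex.exp_eq_exp_ℂ, ← Complex.ofReal_exp,
    Complex.coe_smul]

theorem IsSelfAdjoint.tendsto_exp_mul_smul_exp_neg_smul_apply (hT : IsSelfAdjoint T) {E₀ : ℝ}
    (hmin : ∀ μ : ℂ, HasEigenvalue (T : E →ₗ[ℂ] E) μ → E₀ ≤ μ.re) (x : E) :
    Tendsto (fun τ : ℝ => Real.exp (τ * E₀) • NormedSpace.exp ((-τ : ℂ) • T) x) atTop
      (𝓝 ((eigenspace (T : E →ₗ[ℂ] E) E₀).starProjection x)) := by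
  have hT' := hT.isSymmetric
  have hexp := hT'.exp_neg_smul_apply_eigenvectorBasis rfl
  have hproj := hT'.starProjection_eigenspace_eq_sum rfl E₀ x
  -- the general lemma casts `ℝ → ℂ` through `RCLike.ofReal`, not `Complex.ofReal`
  simp only [RCLike.ofReal_eq_complex_ofReal] at hproj
  set b := hT'.eigenvectorBasis rfl
  set μ := hT'.eigenvalues rfl
  have hexpand (τ : ℝ) : Real.exp (τ * E₀) • NormedSpace.exp ((-τ : ℂ) • T) x =
      ∑ i, Real.exp (-(τ * (μ i - E₀))) • inner ℂ (b i) x • b i := by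
    conv_lhs => rw [← b.sum_repr' x]
    simp only [map_sum, map_smul, hexp, Finset.smul_sum,
      smul_comm _ (inner ℂ _ x), smul_smul, ← Real.exp_add]
    ring_nf
  simp only [hexpand, hproj]
  refine tendsto_finsetSum _ fun i _ => ?_
  have hgap : 0 ≤ μ i - E₀ := by
    simpa using hmin _ (hT'.hasEigenvalue_eigenvalues rfl i)
  simpa only [sub_eq_zero] using tendsto_exp_neg_mul_smul_atTop hgap (inner ℂ (b i) x • b i)

end ImaginaryTime

section Rayleigh

variable {E : Type*} [NormedAddCommGroup E] [InnerProductSpace ℂ E]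

theorem inv_norm_smul_smul_of_norm_eq_one {g : E} (hg : ‖g‖ = 1) (a : ℂ) :
    ‖a • g‖⁻¹ • (a • g) = (a / (‖a‖ : ℂ)) • g := by
  rw [norm_smul, hg, mul_one, ← Complex.coe_smul, smul_smul, div_eq_inv_mul, Complex.ofReal_inv]

theorem inner_smul_apply_smul_div_norm_sq (T : E →L[ℂ] E) {r : ℝ} (hr : r ≠ 0) (x : E) :
    inner ℂ (r • x) (T (r • x)) / (‖r • x‖ : ℂ) ^ 2 = inner ℂ x (T x) / (‖x‖ : ℂ) ^ 2 := by
  have hr' : (r : ℂ) ≠ 0 := by exact_mod_cast hr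
  have habs : ((|r| : ℝ) : ℂ) ^ 2 = (r : ℂ) ^ 2 := by exact_mod_cast sq_abs r
  simp only [← Complex.coe_smul, map_smul, inner_smul_left, inner_smul_right, Complex.conj_ofReal,
    norm_smul, Complex.norm_real, Real.norm_eq_abs, Complex.ofReal_mul, mul_pow, habs]
  field_simp

theorem tendsto_inner_apply_div_norm_sq_of_tendsto_smul {α : Type*} (T : E →L[ℂ] E)
    {l : Filter α} {f : α → E} {r : α → ℝ} (hr : ∀ a, r a ≠ 0) {v : E} (hv : v ≠ 0)
    (h : Tendsto (fun a => r a • f a) l (𝓝 v)) :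
    Tendsto (fun a => inner ℂ (f a) (T (f a)) / (‖f a‖ : ℂ) ^ 2) l
      (𝓝 (inner ℂ v (T v) / (‖v‖ : ℂ) ^ 2)) := by
  have hcont : ContinuousAt (fun x => inner ℂ x (T x) / (‖x‖ : ℂ) ^ 2) v := by
    have : (‖v‖ : ℂ) ^ 2 ≠ 0 := by exact_mod_cast pow_ne_zero 2 (norm_ne_zero_iff.mpr hv)
    fun_prop (disch := exact this)
  exact (hcont.tendsto.comp h).congr fun a => inner_smul_apply_smul_div_norm_sq T (hr a) (f a)

theorem inner_apply_div_norm_sq_of_apply_eq_smul {T : E →L[ℂ] E} {v : E} {c : ℝ}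
    (h : T v = (c : ℂ) • v) (hv : v ≠ 0) : inner ℂ v (T v) / (‖v‖ : ℂ) ^ 2 = c := by
  have : (‖v‖ : ℂ) ^ 2 ≠ 0 := by exact_mod_cast pow_ne_zero 2 (norm_ne_zero_iff.mpr hv)
  rw [h, inner_smul_right, inner_self_eq_norm_sq_to_K, RCLike.ofReal_eq_complex_ofReal,
    mul_div_assoc, div_self this, mul_one]

end Rayleigh

theorem imaginary_time_evolution_converges_general
    {E : Type*} [NormedAddCommGroup E] [InnerProductSpace ℂ E]
    [FiniteDimensional ℂ E]
    (H : E →L[ℂ] E) (hsa : IsSelfAdjoint H)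
    (E₀ : ℝ) (g : E) (hg : ‖g‖ = 1)
    (hmin : ∀ μ : ℂ, Module.End.HasEigenvalue (H : E →ₗ[ℂ] E) μ → (E₀ : ℝ) ≤ μ.re)
    (hone : Module.End.eigenspace (H : E →ₗ[ℂ] E) (E₀ : ℂ) = Submodule.span ℂ {g})
    (ψ₀ : E) (hover : inner (𝕜 := ℂ) g ψ₀ ≠ 0)
    (ψ : ℝ → E) (hψ : ∀ τ : ℝ, ψ τ = NormedSpace.exp ((-τ : ℂ) • H) ψ₀) :
    Tendsto (fun τ : ℝ => (‖ψ τ‖⁻¹ : ℝ) • ψ τ) atTop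
      (nhds ((inner (𝕜 := ℂ) g ψ₀ / (‖inner (𝕜 := ℂ) g ψ₀‖ : ℂ)) • g)) ∧
    Tendsto (fun τ : ℝ => inner (𝕜 := ℂ) (ψ τ) (H (ψ τ)) / ((‖ψ τ‖ : ℂ) ^ 2))
      atTop (nhds (E₀ : ℂ)) := by
  have hlim : Tendsto (fun τ : ℝ => Real.exp (τ * E₀) • ψ τ) atTop (𝓝 (inner ℂ g ψ₀ • g)) := by
    simpa only [hψ, hone, Submodule.starProjection_unit_singleton ℂ hg] using
      hsa.tendsto_exp_mul_smul_exp_neg_smul_apply hmin ψ₀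
  have hv : inner ℂ g ψ₀ • g ≠ 0 := smul_ne_zero hover (norm_ne_zero_iff.mp (by simp [hg]))
  have hHv : H (inner ℂ g ψ₀ • g) = (E₀ : ℂ) • inner ℂ g ψ₀ • g := by
    have hmem : inner ℂ g ψ₀ • g ∈ eigenspace (H : E →ₗ[ℂ] E) (E₀ : ℂ) :=
      hone ▸ Submodule.smul_mem _ _ (Submodule.mem_span_singleton_self g)
    exact mem_eigenspace_iff.mp hmem
  constructor
  · rw [← inv_norm_smul_smul_of_norm_eq_one hg]
    exact tendsto_inv_norm_smul_of_tendsto_smul (fun τ => Real.exp_pos _) hv hlim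
  · rw [← inner_apply_div_norm_sq_of_apply_eq_smul hHv hv]
    exact tendsto_inner_apply_div_norm_sq_of_tendsto_smul H (fun τ => (Real.exp_pos _).ne') hv hlim

/-- Imaginary-time-evolution convergence: if `H` is a self-adjoint operator on
a finite-dimensional complex inner-product space, with smallest eigenvalue
`E₀` whose eigenspace is one-dimensional and spanned by a unit vector `g`, and
`⟪g, ψ₀⟫ ≠ 0`, then the normalized state `e^{-τH} ψ₀ / ‖e^{-τH} ψ₀‖` converges
as `τ → ∞` to `(⟪g,ψ₀⟫/|⟪g,ψ₀⟫|) • g`, and the energy expectation value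
converges to `E₀`. -/
theorem imaginary_time_evolution_converges
    {E : Type*} [NormedAddCommGroup E] [InnerProductSpace ℂ E]
    [FiniteDimensional ℂ E]
    (H : E →L[ℂ] E) (hsa : IsSelfAdjoint H)
    (E₀ : ℝ) (g : E) (hg : ‖g‖ = 1)
    (hgeig : H g = (E₀ : ℂ) • g)
    (hmin : ∀ μ : ℂ, Module.End.HasEigenvalue (H : E →ₗ[ℂ] E) μ → (E₀ : ℝ) ≤ μ.re)
    (hone : Module.End.eigenspace (H : E →ₗ[ℂ] E) (E₀ : ℂ) = Submodule.span ℂ {g})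
    (ψ₀ : E) (hover : inner (𝕜 := ℂ) g ψ₀ ≠ 0)
    (ψ : ℝ → E) (hψ : ∀ τ : ℝ, ψ τ = NormedSpace.exp ((-τ : ℂ) • H) ψ₀) :
    Tendsto (fun τ : ℝ => (‖ψ τ‖⁻¹ : ℝ) • ψ τ) atTop
      (nhds ((inner (𝕜 := ℂ) g ψ₀ / (‖inner (𝕜 := ℂ) g ψ₀‖ : ℂ)) • g)) ∧
    Tendsto (fun τ : ℝ => inner (𝕜 := ℂ) (ψ τ) (H (ψ τ)) / ((‖ψ τ‖ : ℂ) ^ 2))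
      atTop (nhds (E₀ : ℂ)) :=
  imaginary_time_evolution_converges_general H hsa E₀ g hg hmin hone ψ₀ hover ψ hψ
end

section
/- Let K ≠ 0 be real, s = sign(K), W = (1/2)·arccos(e^{−2|K|}), A = e^{|K|}/2, and let U = H₁^x H₂^x CX₁₂ CX₂₃ (Hadamards on qubits 1 and 2, then CNOTs with controls 1→2 and 2→3). Then as operators on three qubits: e^{−K σ₁^x σ₂^x σ₃^z} = A · U · ( Σ_{h ∈ {±1}} e^{−iW(σ₃^z + s·1)h} ) · U†, where the sum over h is a sum of two unitary operators acting only on qubit 3 (tensored with identity on qubits 1, 2). -/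
/-!
The circuit `U` conjugates `σ₃ᶻ` into `σ₁ˣσ₂ˣσ₃ᶻ`: the CNOT ladder permutes the computational
basis so that the spin of qubit 3 becomes the product of all three spins
(`spin (a + b) = spin a * spin b`), and the Hadamards turn `σ₁ᶻ, σ₂ᶻ` into `σ₁ˣ, σ₂ˣ`. Since `exp`
commutes with unitary conjugation, what remains is the one-body identity
`e^{-Kσᶻ} = A Σ_h e^{-iWh(σᶻ + s)}` between diagonal matrices. On an eigenvalue `z = ±1` it reads
`e^{-Kz} = 2A cos (W (z + s))`, which holds because `z + s` is either `0` or `2s`, and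
`cos 2W = e^{-2|K|}`.
-/

open Matrix Kronecker

noncomputable def rbmAngle (K : ℝ) : ℝ := Real.arccos (Real.exp (-2 * |K|)) / 2

noncomputable def rbmAmplitude (K : ℝ) : ℝ := Real.exp |K| / 2

lemma cos_two_mul_rbmAngle (K : ℝ) : Real.cos (2 * rbmAngle K) = Real.exp (-2 * |K|) := by
  rw [rbmAngle, mul_div_cancel₀ _ two_ne_zero]
  refine Real.cos_arccos (by linarith [Real.exp_pos (-2 * |K|)]) ?_
  exact Real.exp_le_one_iff.mpr (by linarith [abs_nonneg K])

lemma cos_rbmAngle_mul (K z : ℝ) (hz : z = 1 ∨ z = -1) :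
    Real.cos (rbmAngle K * (z + Real.sign K)) = Real.exp (-K * z - |K|) := by
  have h := cos_two_mul_rbmAngle K
  rcases lt_trichotomy K 0 with hK | rfl | hK
  · rw [Real.sign_of_neg hK, abs_of_neg hK] at *
    rcases hz with rfl | rfl
    · norm_num
    · rw [← Real.cos_neg]; convert h using 2 <;> ring
  · simp [rbmAngle]
  · rw [Real.sign_of_pos hK, abs_of_pos hK] at *
    rcases hz with rfl | rfl
    · convert h using 2 <;> ring
    · norm_num

lemma rbmAmplitude_mul_two_cos (K z : ℝ) (hz : z = 1 ∨ z = -1) :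
    rbmAmplitude K * (2 * Real.cos (rbmAngle K * (z + Real.sign K))) = Real.exp (-K * z) := by
  rw [cos_rbmAngle_mul K z hz, rbmAmplitude, Real.exp_sub]
  field_simp [Real.exp_ne_zero]

lemma sum_cexp_neg_I_mul_eq_two_cos (W x : ℝ) :
    ∑ h ∈ ({-1, 1} : Finset ℝ), Complex.exp (-(Complex.I * W * h) * x) =
      2 * Real.cos (W * x) := by
  rw [Finset.sum_pair (by norm_num), Complex.ofReal_cos, Complex.two_cos]
  push_cast
  ring_nf

lemma exp_smul_diagonal {ι : Type*} [Fintype ι] [DecidableEq ι] (c : ℂ) (d : ι → ℂ) :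
    NormedSpace.exp (c • diagonal d) = diagonal fun i => Complex.exp (c * d i) := by
  rw [← diagonal_smul, Matrix.exp_diagonal, Pi.exp_def, Complex.exp_eq_exp_ℂ]
  rfl

theorem exp_neg_smul_diagonal_spin_eq_sum {ι : Type*} [Fintype ι] [DecidableEq ι] (K : ℝ)
    (z : ι → ℝ) (hz : ∀ i, z i = 1 ∨ z i = -1) :
    NormedSpace.exp ((-(K : ℂ)) • diagonal fun i => (z i : ℂ)) =
      (rbmAmplitude K : ℂ) • ∑ h ∈ ({-1, 1} : Finset ℝ),
        NormedSpace.exp ((-(Complex.I * rbmAngle K * h)) •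
          ((diagonal fun i => (z i : ℂ)) + (Real.sign K : ℂ) • 1)) := by
  simp only [smul_one_eq_diagonal, diagonal_add, exp_smul_diagonal]
  ext i j
  rcases eq_or_ne i j with rfl | hij
  · simp only [diagonal_apply_eq, Matrix.smul_apply, Matrix.sum_apply, smul_eq_mul]
    rw [show (z i : ℂ) + Real.sign K = ((z i + Real.sign K : ℝ) : ℂ) by push_cast; rfl,
      sum_cexp_neg_I_mul_eq_two_cos]
    exact_mod_cast (rbmAmplitude_mul_two_cos K _ (hz i)).symm
  · simp [diagonal_apply_ne _ hij, Matrix.sum_apply]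

lemma exp_smul_conj_of_mem_unitary {n : Type*} [Fintype n] [DecidableEq n] {U : Matrix n n ℂ}
    (hU : U ∈ unitary (Matrix n n ℂ)) (c : ℂ) (M : Matrix n n ℂ) :
    NormedSpace.exp (c • (U * M * Uᴴ)) = U * NormedSpace.exp (c • M) * Uᴴ := by
  have hinv : U⁻¹ = Uᴴ := Matrix.inv_eq_right_inv (Unitary.mul_star_self_of_mem hU)
  rw [← hinv, ← Matrix.exp_conj _ _ (Unitary.isUnit_coe (U := ⟨U, hU⟩)), mul_smul_comm,
    smul_mul_assoc]

lemma Function.Involutive.permMatrix_toPerm_apply {n R : Type*} [DecidableEq n] [Zero R] [One R]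
    {π : n → n} (hπ : Function.Involutive π) (p q : n) :
    (hπ.toPerm π).permMatrix R p q = if p = π q then 1 else 0 := by
  simp only [Equiv.Perm.permMatrix, PEquiv.toMatrix_apply, Equiv.toPEquiv_apply,
    Option.mem_some_iff, Function.Involutive.coe_toPerm, hπ.eq_iff]

section PermMatrix

variable {n R : Type*} [Fintype n] [DecidableEq n] [Semiring R] [StarRing R]

lemma Equiv.Perm.permMatrix_mem_unitary (σ : Equiv.Perm n) :
    σ.permMatrix R ∈ unitary (Matrix n n R) := by
  rw [Unitary.mem_iff, star_eq_conjTranspose, conjTranspose_permMatrix, ← permMatrix_mul,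
    ← permMatrix_mul, inv_mul_cancel, mul_inv_cancel, permMatrix_one]
  exact ⟨rfl, rfl⟩

lemma Equiv.Perm.permMatrix_mul_diagonal_mul_conjTranspose (σ : Equiv.Perm n) (d : n → R) :
    σ.permMatrix R * diagonal d * (σ.permMatrix R)ᴴ = diagonal (d ∘ σ) := by
  rw [conjTranspose_permMatrix, Equiv.Perm.permMatrix, Equiv.Perm.permMatrix,
    PEquiv.toMatrix_toPEquiv_mul, PEquiv.mul_toMatrix_toPEquiv, submatrix_submatrix]
  exact submatrix_diagonal_equiv d σ

end PermMatrix

def pauliX : Matrix (ZMod 2) (ZMod 2) ℂ := !![0, 1; 1, 0]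

def pauliZ : Matrix (ZMod 2) (ZMod 2) ℂ := !![1, 0; 0, -1]

noncomputable def hadamardGate : Matrix (ZMod 2) (ZMod 2) ℂ :=
  ((1 : ℂ) / Real.sqrt 2) • !![1, 1; 1, -1]

lemma one_div_sqrt_two_mul_self : (1 / Real.sqrt 2 : ℂ) * (1 / Real.sqrt 2) = 1 / 2 := by
  rw [div_mul_div_comm, one_mul, ← Complex.ofReal_mul, Real.mul_self_sqrt zero_le_two]
  norm_num

-- `ZMod 2` unfolds to `Fin 2`, so these identities can be computed with `Matrix.mul_fin_two`.
lemma hadamardGate_conjTranspose : hadamardGateᴴ = hadamardGate := by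
  have : ((((1 : ℂ) / Real.sqrt 2) • !![1, 1; 1, -1])ᴴ : Matrix (Fin 2) (Fin 2) ℂ) =
      ((1 : ℂ) / Real.sqrt 2) • !![1, 1; 1, -1] := by
    ext i j; fin_cases i <;> fin_cases j <;> simp
  exact this

lemma hadamardGate_mul_self : hadamardGate * hadamardGate = 1 := by
  have : (((1 : ℂ) / Real.sqrt 2) • !![1, 1; 1, -1] : Matrix (Fin 2) (Fin 2) ℂ) *
      (((1 : ℂ) / Real.sqrt 2) • !![1, 1; 1, -1]) = 1 := by
    rw [smul_mul_smul_comm, one_div_sqrt_two_mul_self, Matrix.mul_fin_two]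
    ext i j; fin_cases i <;> fin_cases j <;> norm_num
  exact this

lemma hadamardGate_mul_pauliZ_mul_self : hadamardGate * pauliZ * hadamardGate = pauliX := by
  have : (((1 : ℂ) / Real.sqrt 2) • !![1, 1; 1, -1] : Matrix (Fin 2) (Fin 2) ℂ) * !![1, 0; 0, -1] *
      (((1 : ℂ) / Real.sqrt 2) • !![1, 1; 1, -1]) = !![0, 1; 1, 0] := by
    rw [smul_mul_assoc, smul_mul_smul_comm, one_div_sqrt_two_mul_self, Matrix.mul_fin_two,
      Matrix.mul_fin_two]
    ext i j; fin_cases i <;> fin_cases j <;> norm_num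
  exact this

lemma hadamardGate_mem_unitary : hadamardGate ∈ unitary (Matrix (ZMod 2) (ZMod 2) ℂ) := by
  rw [Unitary.mem_iff, star_eq_conjTranspose, hadamardGate_conjTranspose, hadamardGate_mul_self]
  exact ⟨rfl, rfl⟩

def spin (c : ZMod 2) : ℝ := (((-1 : ℤˣ) ^ c : ℤˣ) : ℤ)

lemma spin_eq_one_or_neg_one (c : ZMod 2) : spin c = 1 ∨ spin c = -1 := by
  rcases Int.units_eq_one_or ((-1 : ℤˣ) ^ c) with h | h <;> simp [spin, h]

lemma spin_add (a b : ZMod 2) : spin (a + b) = spin a * spin b := by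
  simp [spin, uzpow_add]

@[simp] lemma spin_zero : spin 0 = 1 := by simp [spin]

@[simp] lemma spin_one : spin 1 = -1 := by simp [spin]

lemma pauliZ_eq_diagonal : pauliZ = diagonal fun c => (spin c : ℂ) := by
  have two_cases : ∀ c : ZMod 2, c = 0 ∨ c = 1 := by decide
  ext i j
  rcases two_cases i with rfl | rfl <;> rcases two_cases j with rfl | rfl <;>
    simp [pauliZ] <;> rfl

lemma one_kronecker_pauliZ {m : Type*} [DecidableEq m] :
    (1 : Matrix m m ℂ) ⊗ₖ pauliZ = diagonal fun p => (spin p.2 : ℂ) := by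
  rw [pauliZ_eq_diagonal, ← diagonal_one, diagonal_kronecker_diagonal]
  simp only [one_mul]

lemma pauliZ_kronecker_pauliZ_kronecker_pauliZ :
    (pauliZ ⊗ₖ pauliZ) ⊗ₖ pauliZ =
      diagonal fun p : (ZMod 2 × ZMod 2) × ZMod 2 => (spin p.1.1 * spin p.1.2 * spin p.2 : ℂ) := by
  rw [pauliZ_eq_diagonal, diagonal_kronecker_diagonal, diagonal_kronecker_diagonal]

def cnot₁₂ : Equiv.Perm ((ZMod 2 × ZMod 2) × ZMod 2) :=
  Function.Involutive.toPerm (fun p => ((p.1.1, p.1.1 + p.1.2), p.2))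
    fun _ => by simp [← add_assoc, CharTwo.add_self_eq_zero]

@[simp] lemma cnot₁₂_apply (p : (ZMod 2 × ZMod 2) × ZMod 2) :
    cnot₁₂ p = ((p.1.1, p.1.1 + p.1.2), p.2) :=
  rfl

lemma cnot₁₂_permMatrix_apply (p q : (ZMod 2 × ZMod 2) × ZMod 2) :
    cnot₁₂.permMatrix ℂ p q =
      if p.1.1 = q.1.1 ∧ p.1.2 = q.1.1 + q.1.2 ∧ p.2 = q.2 then 1 else 0 :=
  (Function.Involutive.permMatrix_toPerm_apply _ p q).trans (by simp only [Prod.ext_iff, and_assoc])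

def cnot₂₃ : Equiv.Perm ((ZMod 2 × ZMod 2) × ZMod 2) :=
  Function.Involutive.toPerm (fun p => ((p.1.1, p.1.2), p.1.2 + p.2))
    fun _ => by simp [← add_assoc, CharTwo.add_self_eq_zero]

@[simp] lemma cnot₂₃_apply (p : (ZMod 2 × ZMod 2) × ZMod 2) :
    cnot₂₃ p = ((p.1.1, p.1.2), p.1.2 + p.2) :=
  rfl

lemma cnot₂₃_permMatrix_apply (p q : (ZMod 2 × ZMod 2) × ZMod 2) :
    cnot₂₃.permMatrix ℂ p q =
      if p.1.1 = q.1.1 ∧ p.1.2 = q.1.2 ∧ p.2 = q.1.2 + q.2 then 1 else 0 :=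
  (Function.Involutive.permMatrix_toPerm_apply _ p q).trans (by simp only [Prod.ext_iff, and_assoc])

lemma cnot_ladder_conj_pauliZ₃ :
    cnot₁₂.permMatrix ℂ * cnot₂₃.permMatrix ℂ * ((1 : Matrix (ZMod 2 × ZMod 2) _ ℂ) ⊗ₖ pauliZ) *
      (cnot₁₂.permMatrix ℂ * cnot₂₃.permMatrix ℂ)ᴴ = (pauliZ ⊗ₖ pauliZ) ⊗ₖ pauliZ := by
  rw [conjTranspose_mul, one_kronecker_pauliZ, pauliZ_kronecker_pauliZ_kronecker_pauliZ,
    show ∀ A B C D E : Matrix ((ZMod 2 × ZMod 2) × ZMod 2) ((ZMod 2 × ZMod 2) × ZMod 2) ℂ,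
      A * B * C * (D * E) = A * (B * C * D) * E from fun _ _ _ _ _ => by noncomm_ring,
    Equiv.Perm.permMatrix_mul_diagonal_mul_conjTranspose,
    Equiv.Perm.permMatrix_mul_diagonal_mul_conjTranspose]
  congr 1
  funext p
  simp [spin_add, mul_assoc]

noncomputable def hadamardCnotCircuit :
    Matrix ((ZMod 2 × ZMod 2) × ZMod 2) ((ZMod 2 × ZMod 2) × ZMod 2) ℂ :=
  ((hadamardGate ⊗ₖ hadamardGate) ⊗ₖ 1) * cnot₁₂.permMatrix ℂ * cnot₂₃.permMatrix ℂ

lemma hadamardCnotCircuit_mem_unitary : hadamardCnotCircuit ∈ unitary (Matrix _ _ ℂ) :=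
  mul_mem (mul_mem (kronecker_mem_unitary (kronecker_mem_unitary hadamardGate_mem_unitary
    hadamardGate_mem_unitary) (one_mem _)) (Equiv.Perm.permMatrix_mem_unitary _))
    (Equiv.Perm.permMatrix_mem_unitary _)

lemma hadamardCnotCircuit_conj_pauliZ₃ :
    hadamardCnotCircuit * ((1 : Matrix (ZMod 2 × ZMod 2) _ ℂ) ⊗ₖ pauliZ) * hadamardCnotCircuitᴴ =
      (pauliX ⊗ₖ pauliX) ⊗ₖ pauliZ := by
  rw [hadamardCnotCircuit, mul_assoc _ (cnot₁₂.permMatrix ℂ), conjTranspose_mul _ (_ * _),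
    show ∀ A B C D : Matrix ((ZMod 2 × ZMod 2) × ZMod 2) ((ZMod 2 × ZMod 2) × ZMod 2) ℂ,
      A * B * C * (D * Aᴴ) = A * (B * C * D) * Aᴴ from fun _ _ _ _ => by noncomm_ring,
    cnot_ladder_conj_pauliZ₃, conjTranspose_kronecker, conjTranspose_kronecker, conjTranspose_one,
    hadamardGate_conjTranspose, ← mul_kronecker_mul, ← mul_kronecker_mul, ← mul_kronecker_mul,
    ← mul_kronecker_mul, hadamardGate_mul_pauliZ_mul_self, one_mul, mul_one]

theorem xxz_three_body_unitary_decomposition_general (K : ℝ)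
    (s W A : ℝ) (hs : s = Real.sign K)
    (hW : W = Real.arccos (Real.exp (-2 * |K|)) / 2)
    (hA : A = Real.exp |K| / 2)
    (σx σz Hx : Matrix (ZMod 2) (ZMod 2) ℂ)
    (hσx : σx = !![0, 1; 1, 0]) (hσz : σz = !![1, 0; 0, -1])
    (hHx : Hx = ((1 : ℂ) / Real.sqrt 2) • !![1, 1; 1, -1])
    (CX12 CX23 U : Matrix ((ZMod 2 × ZMod 2) × ZMod 2) ((ZMod 2 × ZMod 2) × ZMod 2) ℂ)
    (hCX12 : ∀ p q : (ZMod 2 × ZMod 2) × ZMod 2,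
      CX12 p q = if p.1.1 = q.1.1 ∧ p.1.2 = q.1.1 + q.1.2 ∧ p.2 = q.2 then 1 else 0)
    (hCX23 : ∀ p q : (ZMod 2 × ZMod 2) × ZMod 2,
      CX23 p q = if p.1.1 = q.1.1 ∧ p.1.2 = q.1.2 ∧ p.2 = q.1.2 + q.2 then 1 else 0)
    (hU : U = ((Hx ⊗ₖ Hx) ⊗ₖ (1 : Matrix (ZMod 2) (ZMod 2) ℂ)) * CX12 * CX23) :
    NormedSpace.exp ((-(K : ℂ)) • ((σx ⊗ₖ σx) ⊗ₖ σz)) =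
      (A : ℂ) • (U *
        (∑ h ∈ ({-1, 1} : Finset ℝ),
          NormedSpace.exp ((-(Complex.I * W * h)) •
            ((1 : Matrix (ZMod 2 × ZMod 2) (ZMod 2 × ZMod 2) ℂ) ⊗ₖ
              (σz + (s : ℂ) • (1 : Matrix (ZMod 2) (ZMod 2) ℂ))))) * Uᴴ) := by
  obtain rfl : σx = pauliX := hσx
  obtain rfl : σz = pauliZ := hσz
  obtain rfl : Hx = hadamardGate := hHx
  obtain rfl : CX12 = cnot₁₂.permMatrix ℂ :=
    Matrix.ext fun p q => (hCX12 p q).trans (cnot₁₂_permMatrix_apply p q).symm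
  obtain rfl : CX23 = cnot₂₃.permMatrix ℂ :=
    Matrix.ext fun p q => (hCX23 p q).trans (cnot₂₃_permMatrix_apply p q).symm
  obtain rfl : U = hadamardCnotCircuit := hU
  obtain rfl : W = rbmAngle K := hW
  obtain rfl : A = rbmAmplitude K := hA
  subst hs
  have one_body := exp_neg_smul_diagonal_spin_eq_sum K
    (fun p : (ZMod 2 × ZMod 2) × ZMod 2 => spin p.2) fun p => spin_eq_one_or_neg_one p.2
  rw [← hadamardCnotCircuit_conj_pauliZ₃,
    exp_smul_conj_of_mem_unitary hadamardCnotCircuit_mem_unitary, one_kronecker_pauliZ, one_body]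
  simp only [kronecker_add, kronecker_smul, one_kronecker_one, one_kronecker_pauliZ]
  rw [mul_smul_comm, smul_mul_assoc]

/-- The non-diagonal, non-unitary three-body operator `e^{-K σ₁ˣ σ₂ˣ σ₃ᶻ}`
expressed through unitaries: with `s = sign K`, `W = arccos (exp (-2|K|))/2`,
`A = exp |K| / 2`, and `U = H₁ˣ H₂ˣ CX₁₂ CX₂₃`, one has
`e^{-K σ₁ˣσ₂ˣσ₃ᶻ} = A · U (Σ_{h=±1} e^{-i W (σ₃ᶻ + s·1) h}) U†`, where each
summand is a unitary acting only on qubit 3. -/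
theorem xxz_three_body_unitary_decomposition (K : ℝ) (hK : K ≠ 0)
    (s W A : ℝ) (hs : s = Real.sign K)
    (hW : W = Real.arccos (Real.exp (-2 * |K|)) / 2)
    (hA : A = Real.exp |K| / 2)
    (σx σz Hx : Matrix (ZMod 2) (ZMod 2) ℂ)
    (hσx : σx = !![0, 1; 1, 0]) (hσz : σz = !![1, 0; 0, -1])
    (hHx : Hx = ((1 : ℂ) / Real.sqrt 2) • !![1, 1; 1, -1])
    (CX12 CX23 U : Matrix ((ZMod 2 × ZMod 2) × ZMod 2) ((ZMod 2 × ZMod 2) × ZMod 2) ℂ)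
    (hCX12 : ∀ p q : (ZMod 2 × ZMod 2) × ZMod 2,
      CX12 p q = if p.1.1 = q.1.1 ∧ p.1.2 = q.1.1 + q.1.2 ∧ p.2 = q.2 then 1 else 0)
    (hCX23 : ∀ p q : (ZMod 2 × ZMod 2) × ZMod 2,
      CX23 p q = if p.1.1 = q.1.1 ∧ p.1.2 = q.1.2 ∧ p.2 = q.1.2 + q.2 then 1 else 0)
    (hU : U = ((Hx ⊗ₖ Hx) ⊗ₖ (1 : Matrix (ZMod 2) (ZMod 2) ℂ)) * CX12 * CX23) :
    NormedSpace.exp ((-(K : ℂ)) • ((σx ⊗ₖ σx) ⊗ₖ σz)) =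
      (A : ℂ) • (U *
        (∑ h ∈ ({-1, 1} : Finset ℝ),
          NormedSpace.exp ((-(Complex.I * W * h)) •
            ((1 : Matrix (ZMod 2 × ZMod 2) (ZMod 2 × ZMod 2) ℂ) ⊗ₖ
              (σz + (s : ℂ) • (1 : Matrix (ZMod 2) (ZMod 2) ℂ))))) * Uᴴ) :=
  xxz_three_body_unitary_decomposition_general K s W A hs hW hA σx σz Hx hσx hσz hHx CX12 CX23 U
    hCX12 hCX23 hU
end
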